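/- Let λ=(λ₁≥⋯≥λ_ℓ>0) be a partition and b=(b₁,…,b_ℓ) a vector of positive integers. Then the polynomial ∑_{U∈SetSSYT(λ,b)} (q−1)^{ex(U)} ∈ ℤ[q] has nonnegative integer coefficients. (This is the combinatorial content of the nonnegativity assertion of the paper's Theorem on h-polynomials of covexillary Schubert varieties.) -/
import Mathlib


open scoped Classical

noncomputable section

namespace DriftKL

/-- `(i,j)` is a box of the Young diagram of `lam` (French notation, rows indexed
bottom-to-top, everything 1-indexed). -/
def InShape (lam : ℕ → ℕ) (i j : ℕ) : Prop := 1 ≤ i ∧ 1 ≤ j ∧ j ≤ lam i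

/-- `lam` encodes a partition `λ₁ ≥ ⋯ ≥ λ_ℓ > 0` (1-indexed; `0` outside `[1,ℓ]`). -/
def IsPartitionFun (ℓ : ℕ) (lam : ℕ → ℕ) : Prop :=
  (∀ i, 1 ≤ i → i ≤ ℓ → 1 ≤ lam i) ∧
  (∀ i j, 1 ≤ i → i ≤ j → j ≤ ℓ → lam j ≤ lam i) ∧
  (∀ i, i = 0 ∨ ℓ < i → lam i = 0)

/-- The Finset of boxes of the Young diagram of `lam`. -/
def shapeBoxes (ℓ : ℕ) (lam : ℕ → ℕ) : Finset (ℕ × ℕ) :=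
  (Finset.Icc 1 ℓ ×ˢ Finset.Icc 1 (lam 1)).filter (fun p => p.2 ≤ lam p.1)

/-- Semistandardness: positive entries, rows weakly increase left-to-right,
columns strictly increase bottom-to-top. -/
def IsSSYT (lam : ℕ → ℕ) (T : ℕ → ℕ → ℕ) : Prop :=
  (∀ i j, InShape lam i j → 1 ≤ T i j) ∧
  (∀ i j, InShape lam i j → InShape lam i (j+1) → T i j ≤ T i (j+1)) ∧
  (∀ i j, InShape lam i j → InShape lam (i+1) j → T i j < T (i+1) j)

/-- Flagged semistandard Young tableaux of shape `lam`, flagged by `b`,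
represented as functions vanishing off the shape. -/
def SSYTset (lam b : ℕ → ℕ) : Set (ℕ → ℕ → ℕ) :=
  {T | IsSSYT lam T ∧ (∀ i j, InShape lam i j → T i j ≤ b i) ∧
       (∀ i j, ¬ InShape lam i j → T i j = 0)}

/-- Boundary convention: `T(i,0) = 1` for `i > 0`, and `T(0,j) = 0`. -/
def TxC (T : ℕ → ℕ → ℕ) (i j : ℕ) : ℕ :=
  if i = 0 then 0 else if j = 0 then 1 else T i j

/-- The saturation `sat(T)`: `sat(T)(i,j) = [max{T(i,j-1), 1+T(i-1,j)}, T(i,j)]`. -/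
def satF (lam : ℕ → ℕ) (T : ℕ → ℕ → ℕ) (i j : ℕ) : Finset ℕ :=
  if InShape lam i j then
    Finset.Icc (max (TxC T i (j - 1)) (TxC T (i - 1) j + 1)) (T i j)
  else ∅

/-- `depth(T) = |sat(T)| - |λ|`. -/
def depthT (ℓ : ℕ) (lam : ℕ → ℕ) (T : ℕ → ℕ → ℕ) : ℕ :=
  (∑ p ∈ shapeBoxes ℓ lam, (satF lam T p.1 p.2).card) - (shapeBoxes ℓ lam).card

/-- Flagged set-valued semistandard fillings: each box carries a nonempty finite
set of positive integers bounded by the flag, such that every choice of one entry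
per box is semistandard.  Off the shape the value is `∅`. -/
def SetSSYTset (lam b : ℕ → ℕ) : Set (ℕ → ℕ → Finset ℕ) :=
  {U | (∀ i j, InShape lam i j → (U i j).Nonempty) ∧
       (∀ i j, ¬ InShape lam i j → U i j = ∅) ∧
       (∀ i j, InShape lam i j → ∀ x ∈ U i j, 1 ≤ x ∧ x ≤ b i) ∧
       (∀ T : ℕ → ℕ → ℕ, (∀ i j, InShape lam i j → T i j ∈ U i j) →
          (∀ i j, InShape lam i j → InShape lam i (j+1) → T i j ≤ T i (j+1)) ∧
          (∀ i j, InShape lam i j → InShape lam (i+1) j → T i j < T (i+1) j))}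

/-- `ex(U) = |U| - |λ|`. -/
def exU (ℓ : ℕ) (lam : ℕ → ℕ) (U : ℕ → ℕ → Finset ℕ) : ℕ :=
  (∑ p ∈ shapeBoxes ℓ lam, (U p.1 p.2).card) - (shapeBoxes ℓ lam).card

section Proof

variable {ℓ : ℕ} {lam b : ℕ → ℕ}

/-- The maximal entry of a box (0 off the shape / for empty boxes). -/
def maxT (U : ℕ → ℕ → Finset ℕ) (i j : ℕ) : ℕ :=
  if h : (U i j).Nonempty then (U i j).max' h else 0

lemma maxT_mem {U : ℕ → ℕ → Finset ℕ} {i j : ℕ} (h : (U i j).Nonempty) :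
    maxT U i j ∈ U i j := by
  rw [maxT, dif_pos h]; exact Finset.max'_mem _ h

lemma le_maxT {U : ℕ → ℕ → Finset ℕ} {i j x : ℕ} (hx : x ∈ U i j) :
    x ≤ maxT U i j := by
  rw [maxT, dif_pos ⟨x, hx⟩]; exact Finset.le_max' _ _ hx

lemma maxT_empty {U : ℕ → ℕ → Finset ℕ} {i j : ℕ} (h : U i j = ∅) : maxT U i j = 0 := by
  rw [maxT, dif_neg]; simp [h]

lemma inShape_row_le (hlam : IsPartitionFun ℓ lam) {i j : ℕ} (h : InShape lam i j) :
    i ≤ ℓ := by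
  obtain ⟨hi, hj, hjl⟩ := h
  by_contra hc
  have := hlam.2.2 i (Or.inr (by omega))
  omega

lemma mem_shapeBoxes (hlam : IsPartitionFun ℓ lam) {p : ℕ × ℕ} :
    p ∈ shapeBoxes ℓ lam ↔ InShape lam p.1 p.2 := by
  simp only [shapeBoxes, Finset.mem_filter, Finset.mem_product, Finset.mem_Icc, InShape]
  constructor
  · rintro ⟨⟨⟨hi1, _⟩, hj1, _⟩, hj⟩; exact ⟨hi1, hj1, hj⟩
  · rintro ⟨hi1, hj1, hj⟩
    have hiℓ : p.1 ≤ ℓ := inShape_row_le hlam ⟨hi1, hj1, hj⟩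
    have hmono : lam p.1 ≤ lam 1 := hlam.2.1 1 p.1 le_rfl hi1 hiℓ
    exact ⟨⟨⟨hi1, hiℓ⟩, hj1, by omega⟩, hj⟩

/-- Lower bound for the entries of a box given the "max" tableau `T`. -/
def lowB (T : ℕ → ℕ → ℕ) (i j : ℕ) : ℕ :=
  max (TxC T i (j - 1)) (TxC T (i - 1) j + 1)

lemma satF_shape {T : ℕ → ℕ → ℕ} {i j : ℕ} (h : InShape lam i j) :
    satF lam T i j = Finset.Icc (lowB T i j) (T i j) := by
  rw [satF, if_pos h]; rfl

lemma TxC_pos {T : ℕ → ℕ → ℕ} {i j : ℕ} (hi : 1 ≤ i) (hj : 1 ≤ j) :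
    TxC T i j = T i j := by
  rw [TxC, if_neg (by omega), if_neg (by omega)]

lemma maxT_mem_SSYT {U : ℕ → ℕ → Finset ℕ} (hU : U ∈ SetSSYTset lam b) :
    maxT U ∈ SSYTset lam b := by
  obtain ⟨hne, hoff, hbd, hsel⟩ := hU
  have hmem : ∀ i j, InShape lam i j → maxT U i j ∈ U i j := fun i j h => maxT_mem (hne i j h)
  obtain ⟨hrow, hcol⟩ := hsel (maxT U) hmem
  exact ⟨⟨fun i j h => (hbd i j h _ (hmem i j h)).1, hrow, hcol⟩,
    fun i j h => (hbd i j h _ (hmem i j h)).2, fun i j h => maxT_empty (hoff i j h)⟩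

/-- Every entry of a set-valued SSYT lies in `[lowB (maxT U), maxT U]`. -/
lemma entry_bounds (hlam : IsPartitionFun ℓ lam) {U : ℕ → ℕ → Finset ℕ}
    (hU : U ∈ SetSSYTset lam b) {i j x : ℕ} (h : InShape lam i j) (hx : x ∈ U i j) :
    lowB (maxT U) i j ≤ x ∧ x ≤ maxT U i j := by
  obtain ⟨hne, hoff, hbd, hsel⟩ := hU
  refine ⟨?_, le_maxT hx⟩
  have hi1 : 1 ≤ i := h.1
  have hj1 : 1 ≤ j := h.2.1
  set T' : ℕ → ℕ → ℕ := fun i' j' => if i' = i ∧ j' = j then x else maxT U i' j' with hT'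
  have hmem : ∀ i' j', InShape lam i' j' → T' i' j' ∈ U i' j' := by
    intro i' j' h'
    by_cases hc : i' = i ∧ j' = j
    · obtain ⟨rfl, rfl⟩ := hc
      simpa [hT'] using hx
    · simp only [hT', if_neg hc]
      exact maxT_mem (hne i' j' h')
  obtain ⟨hrow, hcol⟩ := hsel T' hmem
  have hx1 : 1 ≤ x := (hbd i j h x hx).1
  refine max_le ?_ ?_
  · rcases eq_or_lt_of_le hj1 with h1 | h2
    · rw [show j - 1 = 0 by omega, TxC, if_neg (by omega), if_pos rfl]
      exact hx1
    · have hjl : j ≤ lam i := h.2.2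
      have hs1 : InShape lam i (j - 1) := ⟨hi1, by omega, by omega⟩
      have hs2 : InShape lam i (j - 1 + 1) := by
        rw [Nat.sub_add_cancel (by omega)]; exact h
      have hr := hrow i (j - 1) hs1 hs2
      rw [TxC_pos hi1 (by omega)]
      have e1 : T' i (j - 1) = maxT U i (j - 1) := by
        simp only [hT', if_neg (by omega : ¬(i = i ∧ j - 1 = j))]
      have e2 : T' i (j - 1 + 1) = x := by
        have hcnd : i = i ∧ j - 1 + 1 = j := ⟨rfl, by omega⟩
        simp only [hT', if_pos hcnd]
      rw [e1, e2] at hr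
      exact hr
  · rcases eq_or_lt_of_le hi1 with h1 | h2
    · rw [show i - 1 = 0 by omega, TxC, if_pos rfl]
      omega
    · have hiℓ : i ≤ ℓ := inShape_row_le hlam h
      have hs1 : InShape lam (i - 1) j :=
        ⟨by omega, hj1, le_trans h.2.2 (hlam.2.1 (i - 1) i (by omega) (by omega) hiℓ)⟩
      have hs2 : InShape lam (i - 1 + 1) j := by
        rw [Nat.sub_add_cancel (by omega)]; exact h
      have hc := hcol (i - 1) j hs1 hs2
      rw [TxC_pos (by omega) hj1]
      have e1 : T' (i - 1) j = maxT U (i - 1) j := by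
        simp only [hT', if_neg (by omega : ¬(i - 1 = i ∧ j = j))]
      have e2 : T' (i - 1 + 1) j = x := by
        have hcnd : i - 1 + 1 = i ∧ j = j := ⟨by omega, rfl⟩
        simp only [hT', if_pos hcnd]
      rw [e1, e2] at hc
      omega

/-- The lower bound is at most the diagonal value for an SSYT. -/
lemma lowB_le_self (hlam : IsPartitionFun ℓ lam) {T : ℕ → ℕ → ℕ}
    (hT : T ∈ SSYTset lam b) {i j : ℕ} (h : InShape lam i j) :
    lowB T i j ≤ T i j := by
  obtain ⟨⟨hpos, hrow, hcol⟩, hflag, hoff⟩ := hT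
  have hi1 : 1 ≤ i := h.1
  have hj1 : 1 ≤ j := h.2.1
  refine max_le ?_ ?_
  · rcases eq_or_lt_of_le hj1 with h1 | h2
    · rw [show j - 1 = 0 by omega, TxC, if_neg (by omega), if_pos rfl]
      exact hpos i j h
    · have hjl : j ≤ lam i := h.2.2
      have hs1 : InShape lam i (j - 1) := ⟨hi1, by omega, by omega⟩
      have hs2 : InShape lam i (j - 1 + 1) := by
        rw [Nat.sub_add_cancel (by omega)]; exact h
      have := hrow i (j - 1) hs1 hs2
      rw [Nat.sub_add_cancel (by omega)] at this
      rw [TxC_pos hi1 (by omega)]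
      exact this
  · rcases eq_or_lt_of_le hi1 with h1 | h2
    · rw [show i - 1 = 0 by omega, TxC, if_pos rfl]
      exact hpos i j h
    · have hiℓ : i ≤ ℓ := inShape_row_le hlam h
      have hs1 : InShape lam (i - 1) j :=
        ⟨by omega, hj1, le_trans h.2.2 (hlam.2.1 (i - 1) i (by omega) (by omega) hiℓ)⟩
      have hs2 : InShape lam (i - 1 + 1) j := by
        rw [Nat.sub_add_cancel (by omega)]; exact h
      have := hcol (i - 1) j hs1 hs2
      rw [Nat.sub_add_cancel (by omega)] at this
      rw [TxC_pos (by omega) hj1]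
      omega

/-- Any filling whose entries obey the interval bounds satisfies the selection condition. -/
lemma sel_of_bounds {T : ℕ → ℕ → ℕ} {U : ℕ → ℕ → Finset ℕ}
    (hbd : ∀ i j, InShape lam i j → ∀ x ∈ U i j, lowB T i j ≤ x ∧ x ≤ T i j) :
    ∀ T'' : ℕ → ℕ → ℕ, (∀ i j, InShape lam i j → T'' i j ∈ U i j) →
      (∀ i j, InShape lam i j → InShape lam i (j+1) → T'' i j ≤ T'' i (j+1)) ∧
      (∀ i j, InShape lam i j → InShape lam (i+1) j → T'' i j < T'' (i+1) j) := by
  intro T'' hm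
  constructor
  · intro i j h1 h2
    have hu : T'' i j ≤ T i j := (hbd i j h1 _ (hm i j h1)).2
    have hl : lowB T i (j+1) ≤ T'' i (j+1) := (hbd i (j+1) h2 _ (hm i (j+1) h2)).1
    have : T i j ≤ lowB T i (j+1) := by
      have e : TxC T i (j + 1 - 1) = T i j := by
        rw [Nat.add_sub_cancel, TxC_pos h1.1 h1.2.1]
      calc T i j = TxC T i (j + 1 - 1) := e.symm
        _ ≤ lowB T i (j+1) := le_max_left _ _
    omega
  · intro i j h1 h2
    have hu : T'' i j ≤ T i j := (hbd i j h1 _ (hm i j h1)).2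
    have hl : lowB T (i+1) j ≤ T'' (i+1) j := (hbd (i+1) j h2 _ (hm (i+1) j h2)).1
    have : T i j + 1 ≤ lowB T (i+1) j := by
      have e : TxC T (i + 1 - 1) j = T i j := by
        rw [Nat.add_sub_cancel, TxC_pos h1.1 h1.2.1]
      calc T i j + 1 = TxC T (i + 1 - 1) j + 1 := by rw [e]
        _ ≤ lowB T (i+1) j := le_max_right _ _
    omega

lemma setSSYT_finite (hlam : IsPartitionFun ℓ lam) : (SetSSYTset lam b).Finite := by
  set M := (Finset.Icc 1 ℓ).sup b with hM
  set enc : (ℕ → ℕ → Finset ℕ) → Finset ((ℕ × ℕ) × ℕ) :=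
    fun U => ((shapeBoxes ℓ lam) ×ˢ Finset.Icc 1 M).filter
      (fun q => q.2 ∈ U q.1.1 q.1.2) with henc
  have hkey : ∀ W ∈ SetSSYTset lam b, ∀ i j, InShape lam i j →
      ∀ x, (x ∈ W i j ↔ ((i,j),x) ∈ enc W) := by
    intro W hW i j hsh x
    simp only [henc, Finset.mem_filter, Finset.mem_product, Finset.mem_Icc]
    constructor
    · intro hxW
      have hbx := hW.2.2.1 i j hsh x hxW
      have hiℓ : i ≤ ℓ := inShape_row_le hlam hsh
      have hxM : x ≤ M := le_trans hbx.2 (Finset.le_sup (Finset.mem_Icc.2 ⟨hsh.1, hiℓ⟩))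
      exact ⟨⟨(mem_shapeBoxes hlam).2 hsh, hbx.1, hxM⟩, hxW⟩
    · exact fun h => h.2
  have hinj : Set.InjOn enc (SetSSYTset lam b) := by
    intro U hU V hV h
    funext i j
    by_cases hsh : InShape lam i j
    · ext x
      rw [hkey U hU i j hsh x, hkey V hV i j hsh x, h]
    · rw [hU.2.1 i j hsh, hV.2.1 i j hsh]
  have hsub : enc '' SetSSYTset lam b ⊆
      ↑((shapeBoxes ℓ lam ×ˢ Finset.Icc 1 M).powerset) := by
    rintro _ ⟨U, _, rfl⟩
    simp only [Finset.coe_powerset, Set.mem_preimage, Set.mem_powerset_iff, Finset.coe_subset]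
    exact Finset.filter_subset _ _
  exact Set.Finite.of_finite_image (Set.Finite.subset (Finset.finite_toSet _) hsub) hinj

/-- Extra available entries attached to the maximal tableau `T`. -/
def DT (ℓ : ℕ) (lam : ℕ → ℕ) (T : ℕ → ℕ → ℕ) : Finset ((ℕ × ℕ) × ℕ) :=
  (shapeBoxes ℓ lam).biUnion
    (fun p => (satF lam T p.1 p.2 \ {T p.1 p.2}).image (fun x => (p, x)))

lemma mem_DT {T : ℕ → ℕ → ℕ} {q : (ℕ × ℕ) × ℕ} :
    q ∈ DT ℓ lam T ↔ q.1 ∈ shapeBoxes ℓ lam ∧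
      q.2 ∈ satF lam T q.1.1 q.1.2 \ {T q.1.1 q.1.2} := by
  obtain ⟨p, x⟩ := q
  simp only [DT, Finset.mem_biUnion, Finset.mem_image]
  constructor
  · rintro ⟨p', hp', x', hx', heq⟩
    obtain ⟨rfl, rfl⟩ := Prod.mk.injEq .. ▸ heq
    exact ⟨hp', hx'⟩
  · rintro ⟨hp, hx⟩
    exact ⟨p, hp, x, hx, rfl⟩

def gmap (ℓ : ℕ) (lam : ℕ → ℕ) (T : ℕ → ℕ → ℕ) (U : ℕ → ℕ → Finset ℕ) :
    Finset ((ℕ × ℕ) × ℕ) :=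
  (DT ℓ lam T).filter (fun q => q.2 ∈ U q.1.1 q.1.2)

def UofE (lam : ℕ → ℕ) (T : ℕ → ℕ → ℕ) (E : Finset ((ℕ × ℕ) × ℕ)) :
    ℕ → ℕ → Finset ℕ :=
  fun i j => if InShape lam i j then
    insert (T i j) ((E.filter (fun q => q.1 = (i,j))).image (fun q => q.2)) else ∅


lemma UofE_bounds (hlam : IsPartitionFun ℓ lam) {T : ℕ → ℕ → ℕ}
    (hT : T ∈ SSYTset lam b) {E : Finset ((ℕ × ℕ) × ℕ)} (hE : E ⊆ DT ℓ lam T) :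
    ∀ i j, InShape lam i j → ∀ x ∈ UofE lam T E i j, lowB T i j ≤ x ∧ x ≤ T i j := by
  intro i j hsh x hx
  rw [UofE, if_pos hsh] at hx
  rcases Finset.mem_insert.1 hx with rfl | hx
  · exact ⟨lowB_le_self hlam hT hsh, le_rfl⟩
  · obtain ⟨q, hq, hqx⟩ := Finset.mem_image.1 hx
    obtain ⟨hqE, hq1⟩ := Finset.mem_filter.1 hq
    obtain ⟨⟨qi, qj⟩, qx⟩ := q
    simp only [Prod.mk.injEq] at hq1
    obtain ⟨rfl, rfl⟩ := hq1
    subst hqx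
    have hqD := hE hqE
    simp only [mem_DT, Finset.mem_sdiff, Finset.mem_singleton] at hqD
    obtain ⟨-, hq2, -⟩ := hqD
    rw [satF_shape hsh, Finset.mem_Icc] at hq2
    exact hq2

lemma UofE_mem (hlam : IsPartitionFun ℓ lam) {T : ℕ → ℕ → ℕ}
    (hT : T ∈ SSYTset lam b) {E : Finset ((ℕ × ℕ) × ℕ)} (hE : E ⊆ DT ℓ lam T) :
    UofE lam T E ∈ SetSSYTset lam b ∧ maxT (UofE lam T E) = T := by
  have hbd := UofE_bounds hlam hT hE
  have hTm : ∀ i j, InShape lam i j → T i j ∈ UofE lam T E i j := by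
    intro i j hsh
    rw [UofE, if_pos hsh]
    exact Finset.mem_insert_self _ _
  constructor
  · refine ⟨fun i j h => ⟨T i j, hTm i j h⟩, fun i j h => by rw [UofE, if_neg h],
      ?_, sel_of_bounds hbd⟩
    intro i j h x hx
    have h2 := hbd i j h x hx
    have hb2 : T i j ≤ b i := hT.2.1 i j h
    have h1 : 1 ≤ lowB T i j := le_trans (Nat.le_add_left 1 _) (le_max_right _ _)
    omega
  · funext i j
    by_cases hsh : InShape lam i j
    · have h1 : maxT (UofE lam T E) i j ∈ UofE lam T E i j := maxT_mem ⟨_, hTm i j hsh⟩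
      have h2 := (hbd i j hsh _ h1).2
      have h3 := le_maxT (hTm i j hsh)
      omega
    · have h0 := hT.2.2 i j hsh
      rw [maxT_empty (by rw [UofE, if_neg hsh])]
      omega

lemma gmap_card (hlam : IsPartitionFun ℓ lam) {U : ℕ → ℕ → Finset ℕ}
    (hU : U ∈ SetSSYTset lam b) :
    (gmap ℓ lam (maxT U) U).card = exU ℓ lam U := by
  set T := maxT U with hT
  have step1 : gmap ℓ lam T U = (shapeBoxes ℓ lam).biUnion
      (fun p => ((U p.1 p.2).erase (T p.1 p.2)).image (fun x => (p, x))) := by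
    rw [gmap, DT, Finset.filter_biUnion]
    refine Finset.biUnion_congr rfl ?_
    intro p hp
    rw [Finset.filter_image]
    congr 1
    ext x
    have hsh := (mem_shapeBoxes hlam).1 hp
    simp only [Finset.mem_filter, Finset.mem_sdiff, Finset.mem_singleton, Finset.mem_erase,
      satF_shape hsh, Finset.mem_Icc]
    constructor
    · rintro ⟨⟨_, hne⟩, hxU⟩
      exact ⟨hne, hxU⟩
    · rintro ⟨hne, hxU⟩
      exact ⟨⟨entry_bounds hlam hU hsh hxU, hne⟩, hxU⟩
  rw [step1, Finset.card_biUnion]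
  · have hcards : ∀ p ∈ shapeBoxes ℓ lam,
        (((U p.1 p.2).erase (T p.1 p.2)).image (fun x => (p, x))).card
          = (U p.1 p.2).card - 1 := by
      intro p hp
      have hsh := (mem_shapeBoxes hlam).1 hp
      rw [Finset.card_image_of_injective _ (fun a c h => by injection h),
        Finset.card_erase_of_mem (hT ▸ maxT_mem (hU.1 _ _ hsh))]
    rw [Finset.sum_congr rfl hcards, exU]
    have h1 : ∀ p ∈ shapeBoxes ℓ lam, 1 ≤ (U p.1 p.2).card :=
      fun p hp => Finset.card_pos.2 (hU.1 _ _ ((mem_shapeBoxes hlam).1 hp))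
    have h2 : ∑ p ∈ shapeBoxes ℓ lam, (U p.1 p.2).card
        = (∑ p ∈ shapeBoxes ℓ lam, ((U p.1 p.2).card - 1)) + (shapeBoxes ℓ lam).card := by
      rw [Finset.card_eq_sum_ones (shapeBoxes ℓ lam), ← Finset.sum_add_distrib]
      exact Finset.sum_congr rfl (fun p hp => by have := h1 p hp; omega)
    omega
  · intro p hp p' hp' hne
    simp only [Finset.disjoint_left, Finset.mem_image]
    rintro q ⟨x, hx, rfl⟩ ⟨y, hy, heq⟩
    simp only [Prod.mk.injEq] at heq
    exact hne heq.1.symm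

lemma UofE_gmap (hlam : IsPartitionFun ℓ lam) {U : ℕ → ℕ → Finset ℕ}
    (hU : U ∈ SetSSYTset lam b) :
    UofE lam (maxT U) (gmap ℓ lam (maxT U) U) = U := by
  funext i j
  by_cases hsh : InShape lam i j
  · ext x
    rw [UofE, if_pos hsh]
    simp only [Finset.mem_insert, Finset.mem_image, Finset.mem_filter, gmap]
    constructor
    · rintro (rfl | ⟨q, ⟨⟨hqD, hqU⟩, hq1⟩, rfl⟩)
      · exact maxT_mem (hU.1 i j hsh)
      · obtain ⟨⟨qi, qj⟩, qx⟩ := q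
        simp only [Prod.mk.injEq] at hq1
        obtain ⟨rfl, rfl⟩ := hq1
        exact hqU
    · intro hx
      by_cases hxT : x = maxT U i j
      · exact Or.inl hxT
      · refine Or.inr ⟨((i,j),x), ⟨⟨?_, hx⟩, rfl⟩, rfl⟩
        simp only [mem_DT, Finset.mem_sdiff, Finset.mem_singleton, satF_shape hsh,
          Finset.mem_Icc]
        exact ⟨(mem_shapeBoxes hlam).2 hsh, entry_bounds hlam hU hsh hx, hxT⟩
  · rw [UofE, if_neg hsh, hU.2.1 i j hsh]

lemma gmap_UofE (hlam : IsPartitionFun ℓ lam) {T : ℕ → ℕ → ℕ}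
    {E : Finset ((ℕ × ℕ) × ℕ)} (hE : E ⊆ DT ℓ lam T) :
    gmap ℓ lam T (UofE lam T E) = E := by
  ext q
  rw [gmap, Finset.mem_filter]
  constructor
  · rintro ⟨hqD, hqU⟩
    have h1 := (mem_DT.1 hqD).1
    have h2 := (mem_DT.1 hqD).2
    have hsh : InShape lam q.1.1 q.1.2 := (mem_shapeBoxes hlam).1 h1
    simp only [UofE, if_pos hsh] at hqU
    rcases Finset.mem_insert.1 hqU with heq | hmem
    · exfalso
      exact (Finset.mem_sdiff.1 h2).2 (Finset.mem_singleton.2 heq)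
    · obtain ⟨q', hq', hq'2⟩ := Finset.mem_image.1 hmem
      obtain ⟨hq'E, hq'1⟩ := Finset.mem_filter.1 hq'
      have hqq : q' = q := Prod.ext hq'1 hq'2
      rwa [hqq] at hq'E
  · intro hq
    have hqD := hE hq
    refine ⟨hqD, ?_⟩
    have hsh : InShape lam q.1.1 q.1.2 := (mem_shapeBoxes hlam).1 (mem_DT.1 hqD).1
    simp only [UofE, if_pos hsh]
    apply Finset.mem_insert_of_mem
    exact Finset.mem_image.2 ⟨q, Finset.mem_filter.2 ⟨hq, rfl⟩, rfl⟩

lemma sum_powerset_pow {ι : Type*} [DecidableEq ι] (s : Finset ι) :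
    ∑ t ∈ s.powerset, ((Polynomial.X : Polynomial ℤ) - 1) ^ t.card
      = (Polynomial.X : Polynomial ℤ) ^ s.card := by
  have h := Finset.prod_add (fun _ : ι => (Polynomial.X : Polynomial ℤ) - 1)
    (fun _ => (1 : Polynomial ℤ)) s
  simp only [sub_add_cancel, Finset.prod_const, one_pow, mul_one] at h
  exact h.symm

lemma fiber_sum (hlam : IsPartitionFun ℓ lam) (hfin : (SetSSYTset lam b).Finite)
    {U0 : ℕ → ℕ → Finset ℕ} (hU0 : U0 ∈ SetSSYTset lam b) :
    ∑ U ∈ hfin.toFinset.filter (fun U => maxT U = maxT U0),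
        ((Polynomial.X : Polynomial ℤ) - 1) ^ exU ℓ lam U
      = (Polynomial.X : Polynomial ℤ) ^ (DT ℓ lam (maxT U0)).card := by
  have hT : maxT U0 ∈ SSYTset lam b := maxT_mem_SSYT hU0
  rw [← sum_powerset_pow (DT ℓ lam (maxT U0))]
  refine Finset.sum_nbij' (gmap ℓ lam (maxT U0)) (UofE lam (maxT U0)) ?_ ?_ ?_ ?_ ?_
  · intro U _
    rw [Finset.mem_powerset]
    exact Finset.filter_subset _ _
  · intro E hE
    rw [Finset.mem_powerset] at hE
    obtain ⟨hmem, hmax⟩ := UofE_mem hlam hT hE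
    rw [Finset.mem_filter, Set.Finite.mem_toFinset]
    exact ⟨hmem, hmax⟩
  · intro U hU
    rw [Finset.mem_filter, Set.Finite.mem_toFinset] at hU
    rw [← hU.2]
    exact UofE_gmap hlam hU.1
  · intro E hE
    exact gmap_UofE hlam (Finset.mem_powerset.1 hE)
  · intro U hU
    rw [Finset.mem_filter, Set.Finite.mem_toFinset] at hU
    congr 1
    rw [← hU.2]
    exact (gmap_card hlam hU.1).symm

end Proof

/-- The polynomial `∑_{U ∈ SetSSYT(λ,b)} (q-1)^{ex(U)} ∈ ℤ[q]`
has nonnegative coefficients. -/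
theorem statement1 (ℓ : ℕ) (lam b : ℕ → ℕ)
    (hlam : IsPartitionFun ℓ lam)
    (hb : ∀ i, 1 ≤ i → i ≤ ℓ → 1 ≤ b i) :
    ∀ k : ℕ,
      0 ≤ (∑ᶠ U ∈ SetSSYTset lam b,
            ((Polynomial.X : Polynomial ℤ) - 1) ^ exU ℓ lam U).coeff k := by
  intro k
  have hfin : (SetSSYTset lam b).Finite := setSSYT_finite hlam
  rw [← hfin.coe_toFinset, finsum_mem_coe_finset]
  rw [← Finset.sum_fiberwise_of_maps_to (g := maxT) (t := hfin.toFinset.image maxT)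
      (fun U hU => Finset.mem_image_of_mem _ hU)
      (fun U => ((Polynomial.X : Polynomial ℤ) - 1) ^ exU ℓ lam U)]
  rw [Polynomial.finset_sum_coeff]
  apply Finset.sum_nonneg
  intro T hT
  obtain ⟨U0, hU0, rfl⟩ := Finset.mem_image.1 hT
  have hU0' : U0 ∈ SetSSYTset lam b := hfin.mem_toFinset.1 hU0
  rw [fiber_sum hlam hfin hU0', Polynomial.coeff_X_pow]
  split <;> norm_num

end DriftKL
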